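/- For each t = T, T−1, …, 1 and each probability distribution π on 𝓜^n, the infimum over prescriptions γ ∈ [0,1]^𝓜 in the dynamic-programming recursion defining V_t(π) is attained (i.e., the minimum exists), and the resulting value function V_t is continuous on the simplex of probability distributions on 𝓜^n. -/

import Mathlib

open Finset

noncomputable section

/-- Likelihood `ℓ(γ,m,u) = ∏_i γ(m^i)^{u^i} (1-γ(m^i))^{1-u^i}`. -/
def ell {n : ℕ} {M : Type} (γ : M → ℝ) (m : Fin n → M) (u : Fin n → Bool) : ℝ :=
  ∏ i : Fin n, if u i then γ (m i) else 1 - γ (m i)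

/-- `P(u|π,γ) = Σ_m π(m) ℓ(γ,m,u)`. -/
def Pout {n : ℕ} {M : Type} [Fintype M]
    (π : (Fin n → M) → ℝ) (γ : M → ℝ) (u : Fin n → Bool) : ℝ :=
  ∑ m : Fin n → M, π m * ell γ m u

open Classical in
/-- Updated belief `η(π,γ,u)(m) = π(m) ℓ(γ,m,u)/P(u|π,γ)` when `P(u|π,γ) ≠ 0`
(and `η(π,γ,u) = π` when `P(u|π,γ) = 0`, an arbitrary convention). -/
def etaUpd {n : ℕ} {M : Type} [Fintype M]
    (π : (Fin n → M) → ℝ) (γ : M → ℝ) (u : Fin n → Bool) : (Fin n → M) → ℝ :=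
  fun m => if Pout π γ u = 0 then π m else π m * ell γ m u / Pout π γ u

/-- One step of the dynamic-programming recursion: the expected current cost plus the
expected cost-to-go `W` at the updated belief,
`Σ_m Σ_u π(m) ℓ(γ,m,u) k(m,u) + Σ_u P(u|π,γ) W(η(π,γ,u))`
(any term with `P(u|π,γ) = 0` vanishes). -/
def stepVal {n : ℕ} {M : Type} [Fintype M]
    (k : (Fin n → M) → (Fin n → Bool) → ℝ)
    (W : ((Fin n → M) → ℝ) → ℝ)
    (π : (Fin n → M) → ℝ) (γ : M → ℝ) : ℝ :=
  (∑ m : Fin n → M, ∑ u : Fin n → Bool, π m * ell γ m u * k m u) +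
    ∑ u : Fin n → Bool, Pout π γ u * W (etaUpd π γ u)

/-- The set of prescriptions: maps `γ : M → [0,1]`. -/
def prescriptions (M : Type) : Set (M → ℝ) :=
  {γ | ∀ a, γ a ∈ Set.Icc (0 : ℝ) 1}

/-- The simplex of probability distributions on `𝓜^n`. -/
def simplex (n : ℕ) (M : Type) [Fintype M] : Set ((Fin n → M) → ℝ) :=
  {π | (∀ m, 0 ≤ π m) ∧ ∑ m : Fin n → M, π m = 1}

/-!
Backward induction on `t`. If `V_{t+1}` is continuous on the simplex, the one-step cost is jointly
continuous in `(π, γ)` on the simplex times `[0,1]^𝓜`. The only delicate terms are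
`P(u|π,γ) V_{t+1}(η(π,γ,u))`: the belief update jumps where `P(u|π,γ) = 0`, but there the term
tends to `0` because `V_{t+1}` is bounded on the compact simplex. Minimising a jointly continuous
function over the compact set `[0,1]^𝓜` attains the minimum and yields a value that is continuous
in `π` (Berge's maximum theorem).
-/

theorem continuousOn_mul_comp_of_norm_le {X Y : Type*} [TopologicalSpace X] [TopologicalSpace Y]
    {P : X → ℝ} {η : X → Y} {W : Y → ℝ} {s : Set X} {S : Set Y} {C : ℝ}
    (hP : ContinuousOn P s) (hW : ContinuousOn W S) (hWC : ∀ y ∈ S, ‖W y‖ ≤ C)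
    (hηS : ∀ x ∈ s, P x ≠ 0 → η x ∈ S) (hη : ContinuousOn η (s ∩ {x | P x ≠ 0})) :
    ContinuousOn (fun x => P x * W (η x)) s := by
  intro x hx
  by_cases h0 : P x = 0
  · have hbound : ∀ y ∈ s, ‖P y * W (η y)‖ ≤ C * ‖P y‖ := by
      intro y hy
      by_cases hy0 : P y = 0
      · simp [hy0]
      · rw [norm_mul, mul_comm C]
        exact mul_le_mul_of_nonneg_left (hWC _ (hηS y hy hy0)) (norm_nonneg _)
    have hPx : Filter.Tendsto (fun y => C * ‖P y‖) (nhdsWithin x s) (nhds 0) := by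
      have := (hP x hx).norm.const_mul C
      rwa [ContinuousWithinAt, h0, norm_zero, mul_zero] at this
    simpa [ContinuousWithinAt, h0] using
      squeeze_zero_norm' (eventually_nhdsWithin_of_forall hbound) hPx
  · have hne : {y | P y ≠ 0} ∈ nhdsWithin x s := (hP x hx).eventually_ne h0
    refine (continuousWithinAt_inter' hne).mp ?_
    exact ((hP.mono Set.inter_subset_left) x ⟨hx, h0⟩).mul <|
      (hW _ (hηS x hx h0)).comp (hη x ⟨hx, h0⟩) fun y hy => hηS y hy.1 hy.2

theorem IsCompact.continuousOn_sInf {X Y : Type*} [TopologicalSpace X] [TopologicalSpace Y]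
    {f : X → Y → ℝ} {s : Set X} {K : Set Y} (hK : IsCompact K)
    (hf : ContinuousOn (Function.uncurry f) (s ×ˢ K)) :
    ContinuousOn (fun x => sInf (f x '' K)) s := by
  have : CompactSpace K := isCompact_iff_compactSpace.mp hK
  have hrestrict : Continuous (Function.uncurry fun (x : s) (y : K) => f x y) :=
    hf.comp_continuous (continuous_subtype_val.prodMap continuous_subtype_val)
      fun p => ⟨p.1.2, p.2.2⟩
  rw [continuousOn_iff_continuous_domRestrict]
  refine (isCompact_univ.continuous_sInf (f := fun (x : s) (y : K) => f x y) hrestrict).congr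
    fun x => ?_
  rw [Set.image_univ, Set.domRestrict_apply, Set.image_eq_range]

theorem isCompact_prescriptions (M : Type) : IsCompact (prescriptions M) := by
  simpa [prescriptions, Set.pi] using
    isCompact_univ_pi fun _ : M => isCompact_Icc (a := (0 : ℝ)) (b := 1)

section Belief

variable {n : ℕ} {M : Type}

@[fun_prop]
theorem continuous_ell (m : Fin n → M) (u : Fin n → Bool) :
    Continuous fun γ : M → ℝ => ell γ m u := by
  refine continuous_finsetProd _ fun i _ => ?_
  cases u i <;> simp only [Bool.false_eq_true, if_true, if_false] <;> fun_prop

theorem ell_nonneg {γ : M → ℝ} (hγ : γ ∈ prescriptions M) (m : Fin n → M)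
    (u : Fin n → Bool) : 0 ≤ ell γ m u := by
  refine Finset.prod_nonneg fun i _ => ?_
  have h := hγ (m i)
  split_ifs
  · exact h.1
  · exact sub_nonneg.mpr h.2

variable [Fintype M]

theorem continuous_Pout (u : Fin n → Bool) :
    Continuous fun p : ((Fin n → M) → ℝ) × (M → ℝ) => Pout p.1 p.2 u :=
  continuous_finsetSum _ fun m _ =>
    ((continuous_apply m).comp continuous_fst).mul ((continuous_ell m u).comp continuous_snd)

theorem continuousOn_etaUpd (u : Fin n → Bool) :
    ContinuousOn (fun p : ((Fin n → M) → ℝ) × (M → ℝ) => etaUpd p.1 p.2 u)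
      {p | Pout p.1 p.2 u ≠ 0} := by
  refine continuousOn_pi.mpr fun m => ?_
  have hformula : ContinuousOn
      (fun p : ((Fin n → M) → ℝ) × (M → ℝ) => p.1 m * ell p.2 m u / Pout p.1 p.2 u)
      {p | Pout p.1 p.2 u ≠ 0} :=
    ((((continuous_apply m).comp continuous_fst).mul
      ((continuous_ell m u).comp continuous_snd)).continuousOn).div
      (continuous_Pout u).continuousOn fun _ hp => hp
  exact hformula.congr fun p hp => if_neg hp

theorem etaUpd_mem_simplex {π : (Fin n → M) → ℝ} {γ : M → ℝ} (hπ : π ∈ simplex n M)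
    (hγ : γ ∈ prescriptions M) {u : Fin n → Bool} (h : Pout π γ u ≠ 0) :
    etaUpd π γ u ∈ simplex n M := by
  have hP : 0 ≤ Pout π γ u :=
    Finset.sum_nonneg fun m _ => mul_nonneg (hπ.1 m) (ell_nonneg hγ m u)
  refine ⟨fun m => ?_, ?_⟩
  · simp only [etaUpd, if_neg h]
    exact div_nonneg (mul_nonneg (hπ.1 m) (ell_nonneg hγ m u)) hP
  · simp only [etaUpd, if_neg h]
    rw [← Finset.sum_div]
    exact div_self h

theorem isCompact_simplex : IsCompact (simplex n M) :=
  isCompact_stdSimplex ℝ (Fin n → M)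

theorem continuousOn_stepVal (k : (Fin n → M) → (Fin n → Bool) → ℝ)
    {W : ((Fin n → M) → ℝ) → ℝ} (hW : ContinuousOn W (simplex n M)) :
    ContinuousOn (fun p : ((Fin n → M) → ℝ) × (M → ℝ) => stepVal k W p.1 p.2)
      (simplex n M ×ˢ prescriptions M) := by
  obtain ⟨C, hC⟩ := isCompact_simplex.exists_bound_of_continuousOn hW
  refine Continuous.continuousOn (by fun_prop) |>.add <|
    continuousOn_finsetSum _ fun u _ => ?_
  exact continuousOn_mul_comp_of_norm_le (continuous_Pout u).continuousOn hW hC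
    (fun p hp h0 => etaUpd_mem_simplex hp.1 hp.2 h0)
    ((continuousOn_etaUpd u).mono Set.inter_subset_right)

theorem continuousOn_sInf_stepVal (k : (Fin n → M) → (Fin n → Bool) → ℝ)
    {W : ((Fin n → M) → ℝ) → ℝ} (hW : ContinuousOn W (simplex n M)) :
    ContinuousOn (fun π => sInf (stepVal k W π '' prescriptions M)) (simplex n M) :=
  (isCompact_prescriptions M).continuousOn_sInf (continuousOn_stepVal k hW)

theorem isLeast_sInf_stepVal (k : (Fin n → M) → (Fin n → Bool) → ℝ)
    {W : ((Fin n → M) → ℝ) → ℝ} (hW : ContinuousOn W (simplex n M))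
    {π : (Fin n → M) → ℝ} (hπ : π ∈ simplex n M) :
    IsLeast (stepVal k W π '' prescriptions M) (sInf (stepVal k W π '' prescriptions M)) := by
  have hγ : ContinuousOn (stepVal k W π) (prescriptions M) :=
    (continuousOn_stepVal k hW).comp (f := fun γ => (π, γ))
      (continuous_const.prodMk continuous_id).continuousOn fun _ hγ => ⟨hπ, hγ⟩
  have hne : (prescriptions M).Nonempty := ⟨0, fun _ => ⟨le_rfl, zero_le_one⟩⟩
  exact ((isCompact_prescriptions M).image_of_continuousOn hγ).isLeast_sInf (hne.image _)

end Belief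

theorem dp_minimum_attained_and_value_continuous_general
    (n T : ℕ)
    (M : Type) [Fintype M]
    (k : Fin T → (Fin n → M) → (Fin n → Bool) → ℝ)
    (V : ℕ → ((Fin n → M) → ℝ) → ℝ)
    (hVT : ∀ π, V T π = 0)
    (hV : ∀ t : Fin T, ∀ π, V t.1 π =
      sInf ((fun γ => stepVal (k t) (V (t.1 + 1)) π γ) '' prescriptions M)) :
    ∀ t : Fin T,
      (∀ π ∈ simplex n M,
        IsLeast ((fun γ => stepVal (k t) (V (t.1 + 1)) π γ) '' prescriptions M)
          (V t.1 π)) ∧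
      ContinuousOn (V t.1) (simplex n M) := by
  have hcont : ∀ j ≤ T, ContinuousOn (V j) (simplex n M) := by
    intro j hj
    induction hj using Nat.decreasingInduction with
    | self => exact continuousOn_const.congr fun π _ => hVT π
    | of_succ j hj ih =>
      exact (continuousOn_sInf_stepVal (k ⟨j, hj⟩) ih).congr fun π _ => hV ⟨j, hj⟩ π
  intro t
  refine ⟨fun π hπ => ?_, hcont t t.2.le⟩
  rw [hV t π]
  exact isLeast_sInf_stepVal (k t) (hcont _ t.2) hπ

/-- For each `t = T, …, 1` and each probability distribution `π` on `𝓜^n`, the infimum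
over prescriptions in the DP recursion defining `V_t(π)` is attained (the minimum
exists, equal to `V_t(π)`), and `V_t` is continuous on the simplex.
(Times are 0-indexed: Lean time `t : Fin T` is paper time `t+1`, and `V T` is the
terminal value `V_{T+1} = 0`.) -/
theorem dp_minimum_attained_and_value_continuous
    (n T : ℕ) (hn : 1 ≤ n) (hT : 1 ≤ T)
    (M : Type) [Fintype M] [Nonempty M]
    (k : Fin T → (Fin n → M) → (Fin n → Bool) → ℝ)
    (V : ℕ → ((Fin n → M) → ℝ) → ℝ)
    (hVT : ∀ π, V T π = 0)
    (hV : ∀ t : Fin T, ∀ π, V t.1 π =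
      sInf ((fun γ => stepVal (k t) (V (t.1 + 1)) π γ) '' prescriptions M)) :
    ∀ t : Fin T,
      (∀ π ∈ simplex n M,
        IsLeast ((fun γ => stepVal (k t) (V (t.1 + 1)) π γ) '' prescriptions M)
          (V t.1 π)) ∧
      ContinuousOn (V t.1) (simplex n M) :=
  dp_minimum_attained_and_value_continuous_general n T M k V hVT hV
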